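/- arXiv:math/0610442 — 4 statements merged into one kernel-verified Lean document; each statement's English description precedes it below -/
import Mathlib

section
/- Let Y : [0,∞) → ℝ be continuous with Y(0) = 0, and suppose Y = Z + L where Z : [0,∞) → [0,∞) is nonnegative, L : [0,∞) → ℝ is continuous, nonincreasing, L(0) = 0, and the Stieltjes measure dL (i.e., d(−L) viewed as a nonnegative measure) is supported on the set {t : Z(t) = 0}. Then L(t) = inf_{0 ≤ s ≤ t} Y(s) for all t ≥ 0 (equivalently, L(t) = min(0, inf_{0≤s≤t} Y(s)), and Z(t) = Y(t) − inf_{0≤s≤t} Y(s)). -/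
/-!
Since `Z ≥ 0` and `L` is nonincreasing, `L t ≤ L s ≤ Y s` for `s ≤ t`, so `L t` is a lower bound
of `Y` on `[0, t]`. It is attained at the first time `s₀ ≤ t` with `L s₀ = L t`: if `s₀ = 0` then
`Y 0 = 0 = L t`; otherwise `Z s₀ = 0`, because `Z = Y - L` is continuous on `[0, ∞)`, so `Z s₀ ≠ 0`
would keep `Z` away from `0` on some `(a, s₀)`, forcing `L a = L s₀` against the minimality of `s₀`.
-/

open Set Topology

namespace Skorokhod

variable {Y Z L : ℝ → ℝ} {t : ℝ}

theorem mem_lowerBounds_image_Icc (hdecomp : ∀ t, 0 ≤ t → Y t = Z t + L t)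
    (hZnonneg : ∀ t, 0 ≤ t → 0 ≤ Z t) (hLmono : AntitoneOn L (Ici 0)) (ht : 0 ≤ t) :
    L t ∈ lowerBounds (Y '' Icc 0 t) := by
  rintro _ ⟨s, hs, rfl⟩
  linarith [hdecomp s hs.1, hZnonneg s hs.1, hLmono hs.1 ht hs.2]

theorem mem_image_Icc (hYcont : Continuous Y) (hY0 : Y 0 = 0)
    (hdecomp : ∀ t, 0 ≤ t → Y t = Z t + L t) (hLcont : Continuous L) (hL0 : L 0 = 0)
    (hsupp : ∀ a b : ℝ, 0 ≤ a → a ≤ b → (∀ t ∈ Ioo a b, Z t ≠ 0) → L a = L b) (ht : 0 ≤ t) :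
    L t ∈ Y '' Icc 0 t := by
  obtain ⟨s₀, ⟨hs₀, hLs₀⟩, hfirst⟩ : ∃ s₀, IsLeast (Icc 0 t ∩ L ⁻¹' {L t}) s₀ :=
    (isCompact_Icc.inter_right (isClosed_singleton.preimage hLcont)).exists_isLeast
      ⟨t, ⟨ht, le_rfl⟩, rfl⟩
  rcases hs₀.1.eq_or_lt with rfl | hs₀pos
  · exact ⟨0, ⟨le_rfl, ht⟩, by rw [hY0, ← hLs₀, hL0]⟩
  have hZ : ∀ s, 0 ≤ s → Y s - L s = Z s := fun s hs => by linarith [hdecomp s hs]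
  refine ⟨s₀, hs₀, ?_⟩
  suffices hZs₀ : Z s₀ = 0 by linarith [hZ s₀ hs₀.1, mem_singleton_iff.1 hLs₀]
  by_contra hZs₀
  have hgap : ∀ᶠ u in 𝓝[<] s₀, Y u - L u ≠ 0 :=
    nhdsWithin_le_nhds <| (hYcont.sub hLcont).continuousAt.eventually_ne <| by
      rwa [Pi.sub_apply, hZ s₀ hs₀.1]
  obtain ⟨a, ⟨ha0, has₀⟩, hIoo⟩ := (mem_nhdsLT_iff_exists_mem_Ico_Ioo_subset hs₀pos).1 hgap
  have hLa : L a = L t :=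
    (hsupp a s₀ ha0 has₀.le fun u hu => hZ u (ha0.trans hu.1.le) ▸ hIoo hu).trans hLs₀
  exact has₀.not_ge (hfirst ⟨⟨ha0, has₀.le.trans hs₀.2⟩, hLa⟩)

end Skorokhod

/-- Uniqueness in Skorohod's reflection lemma: if `Y = Z + L` with `Z ≥ 0`,
`L` continuous nonincreasing starting at `0` and decreasing only on `{Z = 0}`,
then `L` is the running infimum of `Y`. -/
theorem stmt2 (Y Z L : ℝ → ℝ)
    (hYcont : Continuous Y) (hY0 : Y 0 = 0)
    (hdecomp : ∀ t, 0 ≤ t → Y t = Z t + L t)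
    (hZnonneg : ∀ t, 0 ≤ t → 0 ≤ Z t)
    (hLcont : Continuous L) (hLmono : AntitoneOn L (Set.Ici 0)) (hL0 : L 0 = 0)
    (hsupp : ∀ a b : ℝ, 0 ≤ a → a ≤ b →
      (∀ t ∈ Set.Ioo a b, Z t ≠ 0) → L a = L b) :
    ∀ t, 0 ≤ t → L t = sInf (Y '' Set.Icc 0 t) := fun _ ht =>
  (IsLeast.csInf_eq ⟨Skorokhod.mem_image_Icc hYcont hY0 hdecomp hLcont hL0 hsupp ht,
    Skorokhod.mem_lowerBounds_image_Icc hdecomp hZnonneg hLmono ht⟩).symm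
end

section
/- Let σ : [0,∞) → [0,∞) be nondecreasing and A : [0,∞) → [0,∞) be nondecreasing with A(0) = 0 and σ(A(0)) = 0, and define T(t) = t + σ(A(t)) and τ(t) = inf{s ≥ 0 : T(s) > t}. Then 0 ≤ τ(t) ≤ t for every t ≥ 0, and setting τ'(t) = t − τ(t), the function τ' is nondecreasing. -/
open Set

theorem stmt4 (σ A : ℝ → ℝ)
    (hσmono : MonotoneOn σ (Set.Ici 0))
    (hσnonneg : ∀ x : ℝ, 0 ≤ x → 0 ≤ σ x)
    (hAmono : MonotoneOn A (Set.Ici 0))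
    (hAnonneg : ∀ t : ℝ, 0 ≤ t → 0 ≤ A t)
    (hA0 : A 0 = 0) (hσA0 : σ (A 0) = 0)
    (T τ : ℝ → ℝ)
    (hT : ∀ t, T t = t + σ (A t))
    (hτ : ∀ t, τ t = sInf {s : ℝ | 0 ≤ s ∧ T s > t}) :
    (∀ t : ℝ, 0 ≤ t → 0 ≤ τ t ∧ τ t ≤ t) ∧
      MonotoneOn (fun t => t - τ t) (Set.Ici 0) := by
  have hTge : ∀ s : ℝ, 0 ≤ s → s ≤ T s := by
    intro s hs
    rw [hT]
    linarith [hσnonneg (A s) (hAnonneg s hs)]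
  have hne : ∀ t : ℝ, 0 ≤ t → ({s : ℝ | 0 ≤ s ∧ T s > t}).Nonempty := by
    intro t ht
    exact ⟨t + 1, by linarith, lt_of_lt_of_le (by linarith) (hTge (t + 1) (by linarith))⟩
  have hbdd : ∀ t : ℝ, BddBelow {s : ℝ | 0 ≤ s ∧ T s > t} := fun t => ⟨0, fun x hx => hx.1⟩
  have h1 : ∀ t : ℝ, 0 ≤ t → 0 ≤ τ t ∧ τ t ≤ t := by
    intro t ht
    constructor
    · rw [hτ]; exact le_csInf (hne t ht) fun x hx => hx.1
    · rw [hτ]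
      refine le_of_forall_pos_le_add ?_
      intro ε hε
      exact csInf_le (hbdd t) ⟨by linarith, lt_of_lt_of_le (by linarith) (hTge (t + ε) (by linarith))⟩
  refine ⟨h1, ?_⟩
  intro s hs t ht hst
  simp only [mem_Ici] at hs ht
  have key : τ t - (t - s) ≤ τ s := by
    rw [hτ s]
    apply le_csInf (hne s hs)
    intro u hu
    have hu0 : (0:ℝ) ≤ u := hu.1
    have hτt : τ t ≤ u + (t - s) := by
      rw [hτ t]
      apply csInf_le (hbdd t)
      refine ⟨by linarith, ?_⟩
      have hσle : σ (A u) ≤ σ (A (u + (t - s))) :=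
        hσmono (hAnonneg u hu0) (hAnonneg _ (by linarith))
          (hAmono hu0 (by simp only [mem_Ici]; linarith) (by linarith))
      have hu2 := hu.2
      rw [hT] at hu2 ⊢
      linarith
    linarith
  simp only
  linarith
end

section
/- Fix k ∈ ℕ and let φ : (0,∞) → ℝ satisfy the self-similarity relation φ(4u) = 4^{k+3} φ(u) for all u > 0. Suppose φ is of class C^{k+3} on (0,∞) and that for each ℓ = 0, 1, ..., k+3 the ℓ-th derivative φ^{(ℓ)} is bounded on the interval [1,4]. Extend φ to [0,∞) by setting φ(0) = 0. Then φ is of class C^{k+2} on [0,∞), and φ^{(ℓ)}(u) → 0 as u → 0+ for every ℓ = 0, 1, ..., k+2. -/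
/-!
Differentiating the relation `φ (4 u) = 4 ^ (k + 3) * φ u` gives
`4 ^ ℓ * φ⁽ˡ⁾ (4 u) = 4 ^ (k + 3) * φ⁽ˡ⁾ u`, so for `ℓ ≤ k + 2` each derivative shrinks at least
by a factor `4` when `u` is divided by `4`. Propagating the bound on `[1, 4]` down the intervals
`[4⁻ⁿ, 4¹⁻ⁿ]` gives `|φ⁽ˡ⁾ u| ≤ C u`, hence `φ⁽ˡ⁾ → 0` at `0+`. A function that is `Cⁿ` on `(a, ∞)`
and whose derivatives of order `≤ n` all tend to `0` at `a+` extends by zero to a `Cⁿ` function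
on `[a, ∞)`: by induction on `n`, using that a continuous function whose derivative has a limit at
`a+` has that limit as one-sided derivative at `a`.
-/

open Set Filter Topology

theorem mul_mul_deriv_comp_mul_eq {f : ℝ → ℝ} {a b c : ℝ}
    (h : ∀ u > 0, b * f (c * u) = a * f u) :
    ∀ u > 0, b * c * deriv f (c * u) = a * deriv f u := by
  intro u hu
  have hloc : (fun v => b * f (c * v)) =ᶠ[𝓝 u] fun v => a * f v :=
    eventually_of_mem (Ioi_mem_nhds hu) h
  have := hloc.deriv_eq
  simp only [deriv_const_mul_field', deriv_comp_mul_left, smul_eq_mul] at this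
  rw [mul_assoc, this]

theorem pow_mul_iteratedDeriv_comp_mul_eq {f : ℝ → ℝ} {a c : ℝ}
    (h : ∀ u > 0, f (c * u) = a * f u) (ℓ : ℕ) :
    ∀ u > 0, c ^ ℓ * iteratedDeriv ℓ f (c * u) = a * iteratedDeriv ℓ f u := by
  induction ℓ with
  | zero => simpa using h
  | succ ℓ ih =>
    simpa only [iteratedDeriv_succ, pow_succ] using mul_mul_deriv_comp_mul_eq ih

theorem pow_mul_iteratedDerivWithin_Ioi_comp_mul_eq {f : ℝ → ℝ} {a c : ℝ} (hc : 0 < c)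
    (h : ∀ u > 0, f (c * u) = a * f u) (ℓ : ℕ) :
    ∀ u > 0, c ^ ℓ * iteratedDerivWithin ℓ f (Ioi 0) (c * u) =
      a * iteratedDerivWithin ℓ f (Ioi 0) u := by
  intro u hu
  rw [iteratedDerivWithin_of_isOpen isOpen_Ioi (mul_pos hc hu),
    iteratedDerivWithin_of_isOpen isOpen_Ioi hu]
  exact pow_mul_iteratedDeriv_comp_mul_eq h ℓ u hu

theorem abs_le_mul_of_mul_abs_le_abs_comp_mul {g : ℝ → ℝ} {c M : ℝ} (hc : 1 < c)
    (hg : ∀ u > 0, c * |g u| ≤ |g (c * u)|) (hM : ∀ u ∈ Icc 1 c, |g u| ≤ M) :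
    ∀ u ∈ Ioc 0 c, |g u| ≤ M * u := by
  have hM0 : 0 ≤ M := (abs_nonneg _).trans (hM 1 ⟨le_rfl, hc.le⟩)
  have key : ∀ n : ℕ, ∀ u, 1 ≤ c ^ n * u → u ≤ c → |g u| ≤ M * u := by
    intro n
    induction n with
    | zero =>
      intro u h1 hu
      rw [pow_zero, one_mul] at h1
      nlinarith [hM u ⟨h1, hu⟩]
    | succ n ih =>
      intro u h1 hu
      by_cases hn : 1 ≤ c ^ n * u
      · exact ih u hn hu
      have hcn : 1 ≤ c ^ n := one_le_pow₀ hc.le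
      have hu0 : 0 < u := by nlinarith [pow_pos (zero_lt_one.trans hc) (n + 1)]
      have hcu := ih (c * u) (by rw [← mul_assoc, ← pow_succ]; exact h1) (by nlinarith)
      nlinarith [hg u hu0]
  rintro u ⟨hu0, hu⟩
  obtain ⟨n, hn⟩ := pow_unbounded_of_one_lt u⁻¹ hc
  exact key n u (by rw [inv_lt_iff_one_lt_mul₀ hu0] at hn; linarith) hu

theorem tendsto_nhdsGT_zero_of_mul_abs_le_abs_comp_mul {g : ℝ → ℝ} {c M : ℝ} (hc : 1 < c)
    (hg : ∀ u > 0, c * |g u| ≤ |g (c * u)|) (hM : ∀ u ∈ Icc 1 c, |g u| ≤ M) :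
    Tendsto g (𝓝[>] 0) (𝓝 0) := by
  have hbound : ∀ᶠ u in 𝓝[>] 0, |g u| ≤ M * u :=
    Ioc_mem_nhdsGT (zero_lt_one.trans hc) |> eventually_of_mem <|
      abs_le_mul_of_mul_abs_le_abs_comp_mul hc hg hM
  have hlin : Tendsto (fun u => M * u) (𝓝[>] 0) (𝓝 0) := by
    simpa using ((continuous_const_mul M).tendsto 0).mono_left nhdsWithin_le_nhds
  exact squeeze_zero_norm' hbound hlin

section IndicatorIoi

variable {E : Type*} [NormedAddCommGroup E] {f : ℝ → E} {a : ℝ}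

theorem indicator_Ioi_eventuallyEq {x : ℝ} (hx : a < x) : (Ioi a).indicator f =ᶠ[𝓝 x] f :=
  eventually_of_mem (Ioi_mem_nhds hx) fun _ hy => indicator_of_mem hy f

theorem continuousWithinAt_indicator_Ioi (hlim : Tendsto f (𝓝[>] a) (𝓝 0)) :
    ContinuousWithinAt ((Ioi a).indicator f) (Ioi a) a := by
  rw [ContinuousWithinAt, indicator_of_notMem (s := Ioi a) (lt_irrefl a) f]
  exact hlim.congr' (eqOn_indicator (f := f)).symm.eventuallyEq_nhdsWithin

theorem continuousOn_indicator_Ioi (hf : ContinuousOn f (Ioi a))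
    (hlim : Tendsto f (𝓝[>] a) (𝓝 0)) : ContinuousOn ((Ioi a).indicator f) (Ici a) := by
  intro x hx
  rcases (mem_Ici.1 hx).eq_or_lt with rfl | hx
  · rw [← Ioi_insert, continuousWithinAt_insert_self]
    exact continuousWithinAt_indicator_Ioi hlim
  · exact ((hf.continuousAt (Ioi_mem_nhds hx)).congr
      (indicator_Ioi_eventuallyEq hx).symm).continuousWithinAt

variable [NormedSpace ℝ E]

theorem hasDerivWithinAt_indicator_Ioi (hf : DifferentiableOn ℝ f (Ioi a))
    (hlim : Tendsto f (𝓝[>] a) (𝓝 0))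
    (hlim' : Tendsto (derivWithin f (Ioi a)) (𝓝[>] a) (𝓝 0)) {x : ℝ} (hx : x ∈ Ici a) :
    HasDerivWithinAt ((Ioi a).indicator f) ((Ioi a).indicator (derivWithin f (Ioi a)) x)
      (Ici a) x := by
  rcases (mem_Ici.1 hx).eq_or_lt with rfl | hx
  · rw [indicator_of_notMem (s := Ioi a) (lt_irrefl a)]
    refine hasDerivWithinAt_Ici_of_tendsto_deriv
      (hf.congr eqOn_indicator) (continuousWithinAt_indicator_Ioi hlim) self_mem_nhdsWithin
      (hlim'.congr' (eventually_of_mem self_mem_nhdsWithin fun y hy => ?_))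
    exact (derivWithin_of_isOpen isOpen_Ioi hy).trans (indicator_Ioi_eventuallyEq hy).deriv_eq.symm
  · rw [indicator_of_mem (s := Ioi a) hx, derivWithin_of_isOpen isOpen_Ioi hx]
    exact ((hf.differentiableAt (Ioi_mem_nhds hx)).hasDerivAt.congr_of_eventuallyEq
      (indicator_Ioi_eventuallyEq hx)).hasDerivWithinAt

theorem contDiffOn_indicator_Ioi {n : ℕ} (hf : ContDiffOn ℝ n f (Ioi a))
    (hlim : ∀ ℓ ≤ n, Tendsto (iteratedDerivWithin ℓ f (Ioi a)) (𝓝[>] a) (𝓝 0)) :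
    ContDiffOn ℝ n ((Ioi a).indicator f) (Ici a) := by
  induction n generalizing f with
  | zero =>
    exact contDiffOn_zero.2
      (continuousOn_indicator_Ioi hf.continuousOn (by simpa using hlim 0 le_rfl))
  | succ n ih =>
    push_cast at hf ⊢
    obtain ⟨hdiff, -, hf'⟩ := (contDiffOn_succ_iff_derivWithin (uniqueDiffOn_Ioi a)).1 hf
    have hderiv := fun x (hx : x ∈ Ici a) => hasDerivWithinAt_indicator_Ioi hdiff
      (by simpa using hlim 0 (by omega)) (by simpa using hlim 1 (by omega)) hx
    refine (contDiffOn_succ_iff_derivWithin (uniqueDiffOn_Ici a)).2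
      ⟨fun x hx => (hderiv x hx).differentiableWithinAt, by simp, ?_⟩
    refine (ih hf' fun ℓ hℓ => ?_).congr fun x hx =>
      (hderiv x hx).derivWithin (uniqueDiffOn_Ici a x hx)
    rw [← iteratedDerivWithin_succ']
    exact hlim (ℓ + 1) (by omega)

end IndicatorIoi

theorem stmt10 (k : ℕ) (φ : ℝ → ℝ)
    (hself : ∀ u : ℝ, 0 < u → φ (4 * u) = 4 ^ (k + 3) * φ u)
    (hsmooth : ContDiffOn ℝ (k + 3) φ (Set.Ioi 0))
    (hbdd : ∀ ℓ ≤ k + 3, ∃ C : ℝ, ∀ u ∈ Set.Icc (1:ℝ) 4,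
      |iteratedDerivWithin ℓ φ (Set.Ioi 0) u| ≤ C)
    (ψ : ℝ → ℝ)
    (hψ : ∀ u : ℝ, ψ u = if u ≤ 0 then 0 else φ u) :
    ContDiffOn ℝ (k + 2) ψ (Set.Ici 0) ∧
      ∀ ℓ ≤ k + 2,
        Tendsto (iteratedDerivWithin ℓ φ (Set.Ioi 0)) (nhdsWithin 0 (Set.Ioi 0)) (nhds 0) := by
  have hlim : ∀ ℓ ≤ k + 2,
      Tendsto (iteratedDerivWithin ℓ φ (Ioi 0)) (𝓝[>] 0) (𝓝 0) := by
    intro ℓ hℓ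
    obtain ⟨C, hC⟩ := hbdd ℓ (by omega)
    refine tendsto_nhdsGT_zero_of_mul_abs_le_abs_comp_mul (by norm_num) (fun u hu => ?_) hC
    set g := iteratedDerivWithin ℓ φ (Ioi 0)
    have hscale := pow_mul_iteratedDerivWithin_Ioi_comp_mul_eq four_pos hself ℓ u hu
    have hpow : (4 : ℝ) ^ ℓ ≤ 4 ^ (k + 2) := pow_le_pow_right₀ (by norm_num) hℓ
    refine le_of_mul_le_mul_left ?_ (pow_pos four_pos (k + 2))
    calc (4 : ℝ) ^ (k + 2) * (4 * |g u|) = |4 ^ (k + 3) * g u| := by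
          rw [abs_mul, abs_pow, Nat.abs_ofNat]; ring
      _ = 4 ^ ℓ * |g (4 * u)| := by rw [← hscale, abs_mul, abs_pow, Nat.abs_ofNat]
      _ ≤ 4 ^ (k + 2) * |g (4 * u)| := by gcongr
  have hψ_eq : ψ = (Ioi 0).indicator φ := funext fun u => by
    by_cases hu : u ≤ 0 <;> simp [hψ, hu, indicator]
  refine ⟨hψ_eq ▸ ?_, hlim⟩
  exact_mod_cast contDiffOn_indicator_Ioi (hsmooth.of_le (by norm_cast; omega)) hlim
end

section
/- Fix k ∈ ℕ. Suppose α, β, φ : [0,∞) → ℝ are functions with α, β convex, nondecreasing, piecewise affine, twice differentiable except at countably many points, and φ of class C² on (0,∞), such that: (a) φ ≤ α and φ ≤ β pointwise on (0,∞); (b) the set {u > 0 : φ(u) = α(u)} is a discrete set {s_n : n ∈ ℤ} contained in the set of non-differentiability (kink) points of α, with α right-differentiable everywhere and φ'(s_n) = α'(s_n+) for all n; and similarly the set {u > 0 : φ(u) = β(u)} = {t_n : n ∈ ℤ} with φ'(t_n) = β'(t_n+), where the two sets {s_n} and {t_n} are disjoint. Define X₁ = α − φ and X₂ = β − φ, with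 external force F = −φ''. Then X₁ and X₂ are two distinct solutions of the constrained system: Xᵢ ≥ 0 everywhere; Xᵢ(u) = 0 implies the right derivative Ẋᵢ(u+) = 0; and on every open interval where Xᵢ > 0, Xᵢ satisfies Ẍᵢ = F. -/
/-!
Away from its contact points with `φ`, a majorant `γ ∈ {α, β}` is locally affine, so on an
interval where `X = γ - φ` is positive the affine part is invisible to the second derivative and
`Ẍ = -φ''`. At a contact point `X` vanishes, and the matching right derivatives give `Ẋ(u+) = 0`.
Because the two contact sets are disjoint, `X₁` vanishes at `s 0` while `X₂` does not.
-/

open Set Filter Topology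

/-- `Ẍ = F + dA` is encoded by its consequences: the measure `dA` charges only the zeros of `X`,
so `Ẍ = F` is required only on intervals where `X > 0`. -/
def IsInelasticSolution (X F : ℝ → ℝ) : Prop :=
  (∀ u, 0 < u → 0 ≤ X u) ∧
  (∀ u, 0 < u → X u = 0 → derivWithin X (Ici u) u = 0) ∧
  ∀ a b, 0 ≤ a → (∀ u ∈ Ioo a b, 0 < X u) → ∀ u ∈ Ioo a b, deriv (deriv X) u = F u

theorem deriv_deriv_of_eventuallyEq_affine_sub {X φ : ℝ → ℝ} {u c d : ℝ}
    (hX : X =ᶠ[𝓝 u] fun v => c * v + d - φ v) (hφ : ∀ᶠ v in 𝓝 u, DifferentiableAt ℝ φ v) :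
    deriv (deriv X) u = -deriv (deriv φ) u := by
  have hderiv : deriv X =ᶠ[𝓝 u] fun v => c - deriv φ v := by
    filter_upwards [hX.eventuallyEq_nhds, hφ] with v hXv hφv
    have hlin : HasDerivAt (fun w => c * w + d) c v := by
      simpa using ((hasDerivAt_id v).const_mul c).add_const d
    rw [hXv.deriv_eq, deriv_fun_sub hlin.differentiableAt hφv, hlin.deriv]
  rw [hderiv.deriv_eq, deriv_const_sub]

theorem isInelasticSolution_sub_of_contact {γ φ : ℝ → ℝ} {S : Set ℝ}
    (hφ : ContDiffOn ℝ 2 φ (Ioi 0)) (hle : ∀ u, 0 < u → φ u ≤ γ u)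
    (hrd : ∀ u, 0 < u → DifferentiableWithinAt ℝ γ (Ici u) u)
    (hcon : ∀ u, 0 < u → (φ u = γ u ↔ u ∈ S))
    (haff : ∀ u, 0 < u → u ∉ S → ∃ c d : ℝ, ∀ᶠ v in 𝓝 u, γ v = c * v + d)
    (hd : ∀ u ∈ S, derivWithin φ (Ici u) u = derivWithin γ (Ici u) u) :
    IsInelasticSolution (fun u => γ u - φ u) (fun u => -deriv (deriv φ) u) := by
  have hφdiff : ∀ u, 0 < u → DifferentiableAt ℝ φ u := fun u hu =>
    (hφ.differentiableOn (by norm_num)).differentiableAt (Ioi_mem_nhds hu)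
  refine ⟨fun u hu => sub_nonneg.2 (hle u hu), fun u hu hX => ?_, fun a b ha hpos u hu => ?_⟩
  · have hcontact : u ∈ S := (hcon u hu).1 (sub_eq_zero.1 hX).symm
    rw [derivWithin_fun_sub (hrd u hu) (hφdiff u hu).differentiableWithinAt, hd u hcontact,
      sub_self]
  · have hu0 : 0 < u := ha.trans_lt hu.1
    have hfree : u ∉ S := fun h => (hpos u hu).ne' (sub_eq_zero.2 ((hcon u hu0).2 h).symm)
    obtain ⟨c, d, hcd⟩ := haff u hu0 hfree
    exact deriv_deriv_of_eventuallyEq_affine_sub (c := c) (d := d)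
      (hcd.mono fun v hv => by simp only [hv])
      (eventually_of_mem (Ioi_mem_nhds hu0) hφdiff)

theorem stmt11_general (α β φ : ℝ → ℝ) (s t : ℤ → ℝ)
    -- α, β right-differentiable everywhere on [0,∞)
    (hαrd : ∀ u : ℝ, 0 ≤ u → DifferentiableWithinAt ℝ α (Set.Ici u) u)
    (hβrd : ∀ u : ℝ, 0 ≤ u → DifferentiableWithinAt ℝ β (Set.Ici u) u)
    -- α, β piecewise affine: locally affine away from their kink points s n, t n
    (hαaff : ∀ u : ℝ, 0 < u → u ∉ Set.range s →
      ∃ c d : ℝ, ∀ᶠ v in nhds u, α v = c * v + d)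
    (hβaff : ∀ u : ℝ, 0 < u → u ∉ Set.range t →
      ∃ c d : ℝ, ∀ᶠ v in nhds u, β v = c * v + d)
    -- φ of class C² on (0,∞)
    (hφ : ContDiffOn ℝ 2 φ (Set.Ioi 0))
    -- (a) φ ≤ α and φ ≤ β on (0,∞)
    (hφα : ∀ u : ℝ, 0 < u → φ u ≤ α u)
    (hφβ : ∀ u : ℝ, 0 < u → φ u ≤ β u)
    -- (b) the contact sets are exactly the kink sequences, which are positive,
    -- discrete and disjoint, and the right derivatives match there
    (hspos : ∀ n : ℤ, 0 < s n)
    (hconα : ∀ u : ℝ, 0 < u → (φ u = α u ↔ u ∈ Set.range s))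
    (hconβ : ∀ u : ℝ, 0 < u → (φ u = β u ↔ u ∈ Set.range t))
    (hdisj : Disjoint (Set.range s) (Set.range t))
    (hdα : ∀ n : ℤ, derivWithin φ (Set.Ici (s n)) (s n) = derivWithin α (Set.Ici (s n)) (s n))
    (hdβ : ∀ n : ℤ, derivWithin φ (Set.Ici (t n)) (t n) = derivWithin β (Set.Ici (t n)) (t n))
    -- the two trajectories and the force
    (X₁ X₂ F : ℝ → ℝ)
    (hX₁ : ∀ u, X₁ u = α u - φ u) (hX₂ : ∀ u, X₂ u = β u - φ u)
    (hF : ∀ u, F u = -(deriv (deriv φ) u)) :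
    -- X₁ and X₂ are distinct solutions of the constrained system
    (∀ u : ℝ, 0 < u → 0 ≤ X₁ u ∧ 0 ≤ X₂ u) ∧
    (∀ u : ℝ, 0 < u → X₁ u = 0 → derivWithin X₁ (Set.Ici u) u = 0) ∧
    (∀ u : ℝ, 0 < u → X₂ u = 0 → derivWithin X₂ (Set.Ici u) u = 0) ∧
    (∀ a b : ℝ, 0 ≤ a → (∀ u ∈ Set.Ioo a b, 0 < X₁ u) →
      ∀ u ∈ Set.Ioo a b, deriv (deriv X₁) u = F u) ∧
    (∀ a b : ℝ, 0 ≤ a → (∀ u ∈ Set.Ioo a b, 0 < X₂ u) →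
      ∀ u ∈ Set.Ioo a b, deriv (deriv X₂) u = F u) ∧
    (∃ u : ℝ, 0 < u ∧ X₁ u ≠ X₂ u) := by
  obtain rfl : X₁ = fun u => α u - φ u := funext hX₁
  obtain rfl : X₂ = fun u => β u - φ u := funext hX₂
  obtain rfl : F = fun u => -deriv (deriv φ) u := funext hF
  obtain ⟨h₁nonneg, h₁stop, h₁free⟩ := isInelasticSolution_sub_of_contact hφ hφα
    (fun u hu => hαrd u hu.le) hconα hαaff (forall_mem_range.2 hdα)
  obtain ⟨h₂nonneg, h₂stop, h₂free⟩ := isInelasticSolution_sub_of_contact hφ hφβ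
    (fun u hu => hβrd u hu.le) hconβ hβaff (forall_mem_range.2 hdβ)
  refine ⟨fun u hu => ⟨h₁nonneg u hu, h₂nonneg u hu⟩, h₁stop, h₂stop, h₁free, h₂free,
    s 0, hspos 0, fun h => ?_⟩
  have hα0 : φ (s 0) = α (s 0) := (hconα _ (hspos 0)).2 ⟨0, rfl⟩
  have hβ0 : φ (s 0) = β (s 0) := by linarith
  exact hdisj.ne_of_mem ⟨0, rfl⟩ ((hconβ _ (hspos 0)).1 hβ0) rfl

/-- The structure of the counterexample to uniqueness for the deterministic
completely inelastic bouncing problem: two convex piecewise-affine majorants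
`α`, `β` of a `C²` function `φ`, touching it along disjoint sequences of kink
points, give rise to two distinct solutions `X₁ = α - φ`, `X₂ = β - φ` of the
constrained system with external force `F = -φ''`. -/
theorem stmt11 (k : ℕ) (α β φ : ℝ → ℝ) (s t : ℤ → ℝ)
    -- α, β convex nondecreasing
    (hαconv : ConvexOn ℝ (Set.Ici 0) α) (hαmono : MonotoneOn α (Set.Ici 0))
    (hβconv : ConvexOn ℝ (Set.Ici 0) β) (hβmono : MonotoneOn β (Set.Ici 0))
    -- α, β right-differentiable everywhere on [0,∞)
    (hαrd : ∀ u : ℝ, 0 ≤ u → DifferentiableWithinAt ℝ α (Set.Ici u) u)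
    (hβrd : ∀ u : ℝ, 0 ≤ u → DifferentiableWithinAt ℝ β (Set.Ici u) u)
    -- α, β piecewise affine: locally affine away from their kink points s n, t n
    (hαaff : ∀ u : ℝ, 0 < u → u ∉ Set.range s →
      ∃ c d : ℝ, ∀ᶠ v in nhds u, α v = c * v + d)
    (hβaff : ∀ u : ℝ, 0 < u → u ∉ Set.range t →
      ∃ c d : ℝ, ∀ᶠ v in nhds u, β v = c * v + d)
    -- φ of class C² on (0,∞)
    (hφ : ContDiffOn ℝ 2 φ (Set.Ioi 0))
    -- (a) φ ≤ α and φ ≤ β on (0,∞)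
    (hφα : ∀ u : ℝ, 0 < u → φ u ≤ α u)
    (hφβ : ∀ u : ℝ, 0 < u → φ u ≤ β u)
    -- (b) the contact sets are exactly the kink sequences, which are positive,
    -- discrete and disjoint, and the right derivatives match there
    (hspos : ∀ n : ℤ, 0 < s n) (htpos : ∀ n : ℤ, 0 < t n)
    (hsdisc : ∀ n : ℤ, ∃ ε > (0:ℝ), ∀ m : ℤ, m ≠ n → |s m - s n| ≥ ε)
    (htdisc : ∀ n : ℤ, ∃ ε > (0:ℝ), ∀ m : ℤ, m ≠ n → |t m - t n| ≥ ε)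
    (hconα : ∀ u : ℝ, 0 < u → (φ u = α u ↔ u ∈ Set.range s))
    (hconβ : ∀ u : ℝ, 0 < u → (φ u = β u ↔ u ∈ Set.range t))
    (hdisj : Disjoint (Set.range s) (Set.range t))
    (hdα : ∀ n : ℤ, derivWithin φ (Set.Ici (s n)) (s n) = derivWithin α (Set.Ici (s n)) (s n))
    (hdβ : ∀ n : ℤ, derivWithin φ (Set.Ici (t n)) (t n) = derivWithin β (Set.Ici (t n)) (t n))
    -- the two trajectories and the force
    (X₁ X₂ F : ℝ → ℝ)
    (hX₁ : ∀ u, X₁ u = α u - φ u) (hX₂ : ∀ u, X₂ u = β u - φ u)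
    (hF : ∀ u, F u = -(deriv (deriv φ) u)) :
    -- X₁ and X₂ are distinct solutions of the constrained system
    (∀ u : ℝ, 0 < u → 0 ≤ X₁ u ∧ 0 ≤ X₂ u) ∧
    (∀ u : ℝ, 0 < u → X₁ u = 0 → derivWithin X₁ (Set.Ici u) u = 0) ∧
    (∀ u : ℝ, 0 < u → X₂ u = 0 → derivWithin X₂ (Set.Ici u) u = 0) ∧
    (∀ a b : ℝ, 0 ≤ a → (∀ u ∈ Set.Ioo a b, 0 < X₁ u) →
      ∀ u ∈ Set.Ioo a b, deriv (deriv X₁) u = F u) ∧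
    (∀ a b : ℝ, 0 ≤ a → (∀ u ∈ Set.Ioo a b, 0 < X₂ u) →
      ∀ u ∈ Set.Ioo a b, deriv (deriv X₂) u = F u) ∧
    (∃ u : ℝ, 0 < u ∧ X₁ u ≠ X₂ u) :=
  stmt11_general α β φ s t hαrd hβrd hαaff hβaff hφ hφα hφβ hspos hconα hconβ hdisj hdα hdβ X₁ X₂ F
    hX₁ hX₂ hF
end
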